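/- arXiv:2203.01691 — 6 statements merged into one kernel-verified Lean document; each statement's English description precedes it below -/
import Mathlib

section
/- Let O be an integral domain, let v : O → ℤ ∪ {∞} be a pseudo-valuation, and let S_v be the multiplicatively closed set of nonzero v-stable elements of O. Then v extends to the ring of fractions S_v^{-1}O: the map w given by w(a/s) = v(a) − v(s) is well defined (independent of the representation of the fraction), satisfies w(a/1) = v(a) for all a ∈ O, and satisfies the axioms of a pseudo-valuation on S_v^{-1}O (with the axioms read with values in ℤ ∪ {∞}). -/
/-!
Every `s ∈ S_v` has a finite value and `v (s * b) = v s + v b`, so `v s` can be cancelled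
from both sides of any equation or inequality in the value group. Hence `w (a / s)` is
characterised by `w (a / s) + v s = v a`, and each axiom for `w` becomes, after adding the
values of the denominators, the corresponding axiom for `v`.
-/

namespace LinearOrderedAddCommGroupWithTop

variable {Γ : Type*} [LinearOrderedAddCommGroupWithTop Γ] {a b : Γ}

lemma sub_add_cancel_of_ne_top (hb : b ≠ ⊤) (a : Γ) : a - b + b = a := by
  rw [sub_eq_add_neg, neg_add_cancel_right_of_ne_top hb]

lemma eq_zero_of_add_self_eq (ha : a ≠ ⊤) (h : a + a = a) : a = 0 := by
  rwa [← add_right_inj_of_ne_top ha, add_zero]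

end LinearOrderedAddCommGroupWithTop

section Extension

open Localization LinearOrderedAddCommGroupWithTop

variable {O Γ : Type*} [CommRing O] [LinearOrderedAddCommGroupWithTop Γ]

def IsStableSubmonoid (v : O → Γ) (S : Submonoid O) : Prop :=
  ∀ s ∈ S, v s ≠ ⊤ ∧ ∀ b, v (s * b) = v s + v b

namespace IsStableSubmonoid

variable {v : O → Γ} {S : Submonoid O}

lemma ne_top (hS : IsStableSubmonoid v S) {s : O} (hs : s ∈ S) : v s ≠ ⊤ := (hS s hs).1

lemma map_mul (hS : IsStableSubmonoid v S) {s : O} (hs : s ∈ S) (b : O) :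
    v (s * b) = v s + v b :=
  (hS s hs).2 b

lemma map_one (hS : IsStableSubmonoid v S) : v 1 = 0 :=
  eq_zero_of_add_self_eq (hS.ne_top S.one_mem) <| by rw [← hS.map_mul S.one_mem, one_mul]

lemma sub_eq_sub_of_r (hS : IsStableSubmonoid v S) {a c : O} {s t : S}
    (h : r S (a, s) (c, t)) : v a - v s = v c - v t := by
  obtain ⟨u, hu⟩ := r_iff_exists.mp h
  have hcross : v t + v a = v s + v c := by
    have := congrArg v hu
    simp only [hS.map_mul u.2, hS.map_mul t.2, hS.map_mul s.2] at this
    exact (add_right_inj_of_ne_top (hS.ne_top u.2)).mp this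
  have hst : v s + v t ≠ ⊤ := add_ne_top.mpr ⟨hS.ne_top s.2, hS.ne_top t.2⟩
  rw [← add_left_inj_of_ne_top hst]
  calc v a - v s + (v s + v t) = v t + v a := by
        rw [← add_assoc, sub_add_cancel_of_ne_top (hS.ne_top s.2), add_comm]
    _ = v s + v c := hcross
    _ = v c - v t + (v s + v t) := by
        rw [add_left_comm, sub_add_cancel_of_ne_top (hS.ne_top t.2)]

noncomputable def extend (hS : IsStableSubmonoid v S) (r : Localization S) : Γ :=
  r.liftOn (fun a s => v a - v s) hS.sub_eq_sub_of_r

variable (hS : IsStableSubmonoid v S)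

lemma extend_mk_add (a : O) (s : S) : hS.extend (mk a s) + v s = v a :=
  sub_add_cancel_of_ne_top (hS.ne_top s.2) _

lemma le_extend_mk_iff {x : Γ} {a : O} {s : S} : x ≤ hS.extend (mk a s) ↔ x + v s ≤ v a := by
  rw [← add_le_add_iff_left_of_ne_top (hS.ne_top s.2), hS.extend_mk_add]

lemma extend_algebraMap (a : O) : hS.extend (algebraMap O (Localization S) a) = v a := by
  have := hS.extend_mk_add a 1
  rwa [Submonoid.coe_one, hS.map_one, add_zero, mk_one_eq_algebraMap] at this

lemma extend_eq_top_iff (h1 : ∀ a, v a = ⊤ ↔ a = 0) (r : Localization S) :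
    hS.extend r = ⊤ ↔ r = 0 := by
  induction r with | _ p
  obtain ⟨a, s⟩ := p
  have hvs := hS.ne_top s.2
  calc hS.extend (mk a s) = ⊤ ↔ v a = ⊤ := by
        rw [← hS.extend_mk_add a s, add_eq_top, or_iff_left hvs]
    _ ↔ ∃ u : S, (u : O) * a = 0 := by
        refine ⟨fun ha => ⟨1, by rw [Submonoid.coe_one, one_mul, ← h1, ha]⟩, ?_⟩
        rintro ⟨u, hu⟩
        rwa [← h1, hS.map_mul u.2, add_eq_top, or_iff_right (hS.ne_top u.2)] at hu
    _ ↔ mk a s = 0 := by rw [mk_eq_mk'_apply, IsLocalization.mk'_eq_zero_iff]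

lemma extend_neg_one (h2 : v (-1) = 0) : hS.extend (-1) = 0 := by
  rw [← _root_.map_one (algebraMap O (Localization S)), ← map_neg, extend_algebraMap, h2]

lemma add_le_extend_mul (h3 : ∀ a b, v a + v b ≤ v (a * b)) (r r' : Localization S) :
    hS.extend r + hS.extend r' ≤ hS.extend (r * r') := by
  induction r, r' using induction_on₂ with | _ p q
  obtain ⟨a, s⟩ := p
  obtain ⟨b, t⟩ := q
  dsimp only
  rw [mk_mul, le_extend_mk_iff, Submonoid.coe_mul, hS.map_mul s.2, add_add_add_comm,
    extend_mk_add, extend_mk_add]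
  exact h3 a b

lemma min_le_extend_add (h4 : ∀ a b, min (v a) (v b) ≤ v (a + b)) (r r' : Localization S) :
    min (hS.extend r) (hS.extend r') ≤ hS.extend (r + r') := by
  induction r, r' using induction_on₂ with | _ p q
  obtain ⟨a, s⟩ := p
  obtain ⟨b, t⟩ := q
  dsimp only
  rw [add_mk, le_extend_mk_iff, add_comm (s * b : O)]
  calc min (hS.extend (mk a s)) (hS.extend (mk b t)) + v (s * t : S)
      = min (hS.extend (mk a s) + v s + v t) (hS.extend (mk b t) + v t + v s) := by
        rw [Submonoid.coe_mul, hS.map_mul s.2, ← add_assoc, ← min_add_add_right,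
          ← min_add_add_right, add_right_comm (hS.extend (mk b t))]
    _ = min (v (t * a)) (v (s * b)) := by
        rw [extend_mk_add, extend_mk_add, hS.map_mul t.2, hS.map_mul s.2, add_comm (v t),
          add_comm (v s)]
    _ ≤ v (t * a + s * b) := h4 _ _

end IsStableSubmonoid

end Extension

theorem statement5_general {O : Type*} [CommRing O] (v : O → WithTop ℤ)
    (h1 : ∀ a : O, v a = ⊤ ↔ a = 0)
    (h2 : v (-1) = 0)
    (h3 : ∀ a b : O, v a + v b ≤ v (a * b))
    (h4 : ∀ a b : O, min (v a) (v b) ≤ v (a + b))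
    (S : Submonoid O)
    (hS : ∀ a : O, a ∈ S ↔ a ≠ 0 ∧ ∀ b : O, v (a * b) = v a + v b) :
    ∃ w : Localization S → WithTop ℤ,
      (∀ (a : O) (s : S), w (Localization.mk a s) + v (s : O) = v a) ∧
      (∀ a : O, w (algebraMap O (Localization S) a) = v a) ∧
      (∀ r : Localization S, w r = ⊤ ↔ r = 0) ∧
      w (-1) = 0 ∧
      (∀ r r' : Localization S, w r + w r' ≤ w (r * r')) ∧
      (∀ r r' : Localization S, min (w r) (w r') ≤ w (r + r')) := by
  have hstable : IsStableSubmonoid v S := fun s hs =>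
    ⟨fun htop => ((hS s).mp hs).1 ((h1 s).mp htop), ((hS s).mp hs).2⟩
  exact ⟨hstable.extend, hstable.extend_mk_add, hstable.extend_algebraMap,
    hstable.extend_eq_top_iff h1, hstable.extend_neg_one h2, hstable.add_le_extend_mul h3,
    hstable.min_le_extend_add h4⟩

/-- Let `O` be an integral domain, `v : O → ℤ ∪ {∞}` a pseudo-valuation and
`S_v` the multiplicatively closed set of nonzero `v`-stable elements of `O`.  Then `v`
extends to the ring of fractions `S_v⁻¹O`: there is a map `w` with `w (a/s) = v a - v s`
(well defined, i.e. independent of the representation of the fraction; since `v s ≠ ∞`, this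
equation is expressed as `w (a/s) + v s = v a`), with `w (a/1) = v a` for all `a ∈ O`, and
`w` satisfies the axioms of a pseudo-valuation on `S_v⁻¹O`. -/
theorem statement5 {O : Type*} [CommRing O] [IsDomain O] (v : O → WithTop ℤ)
    (h1 : ∀ a : O, v a = ⊤ ↔ a = 0)
    (h2 : v (-1) = 0)
    (h3 : ∀ a b : O, v a + v b ≤ v (a * b))
    (h4 : ∀ a b : O, min (v a) (v b) ≤ v (a + b))
    (S : Submonoid O)
    (hS : ∀ a : O, a ∈ S ↔ a ≠ 0 ∧ ∀ b : O, v (a * b) = v a + v b) :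
    ∃ w : Localization S → WithTop ℤ,
      (∀ (a : O) (s : S), w (Localization.mk a s) + v (s : O) = v a) ∧
      (∀ a : O, w (algebraMap O (Localization S) a) = v a) ∧
      (∀ r : Localization S, w r = ⊤ ↔ r = 0) ∧
      w (-1) = 0 ∧
      (∀ r r' : Localization S, w r + w r' ≤ w (r * r')) ∧
      (∀ r r' : Localization S, min (w r) (w r') ≤ w (r + r')) :=
  statement5_general v h1 h2 h3 h4 S hS
end

section
/- Let N > 1 be an integer and let a be a nonzero integer with k = ord_N(a). Then a is stable for the pseudo-valuation ord_N on ℤ, i.e., ord_N(ab) = ord_N(a) + ord_N(b) for every integer b, if and only if gcd(a / N^k, N) = 1 (equivalently, if and only if the image of a / N^k in ℤ/Nℤ is a unit). -/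
/-!
Write `a = N^k a'`. Since `ord_N (N^k x) = k + ord_N x`, the element `a` is stable exactly when
`ord_N (a' b) = ord_N b` for all `b`. This holds when `a'` is coprime to `N`, since then
`N^n ∣ a' b ↔ N^n ∣ b`. Otherwise `g = gcd(a', N) > 1`, and `b = N / g` satisfies
`ord_N b = 0` (as `0 < b < N`) while `N ∣ a' b`.
-/

/-- The `N`-adic pseudo-valuation on `ℤ`: `ordN N a = k` if `N^k ∣ a` and `N^(k+1) ∤ a`,
and `ordN N 0 = ∞`.  (For `N > 1` this is the `emultiplicity` of `N` in `a`.) -/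
noncomputable def ordN (N : ℕ) (a : ℤ) : ℕ∞ := emultiplicity (N : ℤ) a

theorem emultiplicity_pow_mul {α : Type*} [CommMonoidWithZero α] [IsCancelMulZero α] {p : α}
    (hp : p ≠ 0) (k : ℕ) (x : α) : emultiplicity p (p ^ k * x) = k + emultiplicity p x := by
  by_cases hfin : FiniteMultiplicity p x
  · obtain ⟨hdvd, hndvd⟩ := emultiplicity_eq_coe.mp hfin.emultiplicity_eq_multiplicity
    rw [hfin.emultiplicity_eq_multiplicity, ← Nat.cast_add, emultiplicity_eq_coe, pow_add,
      add_assoc, pow_add]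
    simp only [mul_dvd_mul_iff_left (pow_ne_zero k hp)]
    exact ⟨hdvd, hndvd⟩
  · have hfin' : ¬FiniteMultiplicity p (p ^ k * x) := mt FiniteMultiplicity.mul_right hfin
    rw [emultiplicity_eq_top.mpr hfin, emultiplicity_eq_top.mpr hfin', add_top]

theorem IsCoprime.emultiplicity_mul_left {R : Type*} [CommRing R] {p x : R} (h : IsCoprime x p)
    (b : R) : emultiplicity p (x * b) = emultiplicity p b :=
  emultiplicity_eq_emultiplicity_iff.mpr fun _ =>
    ⟨h.symm.pow_left.dvd_of_dvd_mul_left, fun hb => hb.mul_left x⟩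

theorem ordN_pow_mul {N : ℕ} (hN : N ≠ 0) (k : ℕ) (x : ℤ) :
    ordN N ((N : ℤ) ^ k * x) = k + ordN N x :=
  emultiplicity_pow_mul (Int.natCast_ne_zero.mpr hN) k x

theorem exists_ordN_mul_ne_of_not_isCoprime {N : ℕ} (hN : 1 < N) {x : ℤ}
    (hx : ¬IsCoprime x N) : ∃ b : ℤ, ordN N (x * b) ≠ ordN N b := by
  obtain ⟨x', hx'⟩ := Int.gcd_dvd_left x N
  obtain ⟨e, he⟩ : Int.gcd x N ∣ N := Nat.gcd_dvd_right _ _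
  have hg : Int.gcd x N ≠ 1 := mt Int.isCoprime_iff_gcd_eq_one.mpr hx
  have he_pos : 0 < e := Nat.pos_of_ne_zero (by rintro rfl; omega)
  have he_lt : e < N := by
    rcases Nat.lt_or_ge (Int.gcd x N) 2 with hg2 | hg2
    · interval_cases Int.gcd x N <;> omega
    · nlinarith
  refine ⟨e, ?_⟩
  have hNe : ordN N e = 0 :=
    emultiplicity_eq_zero.mpr fun hdvd =>
      absurd (Nat.le_of_dvd he_pos (Int.natCast_dvd_natCast.mp hdvd)) (by omega)
  have hNxe : (N : ℤ) ∣ x * e := by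
    have hN' : (N : ℤ) = Int.gcd x N * e := by exact_mod_cast he
    exact ⟨x', by linear_combination (e : ℤ) * hx' - x' * hN'⟩
  rw [hNe]
  exact emultiplicity_ne_zero.mpr hNxe

theorem forall_ordN_mul_eq_iff_isCoprime {N : ℕ} (hN : 1 < N) (x : ℤ) :
    (∀ b : ℤ, ordN N (x * b) = ordN N b) ↔ IsCoprime x N := by
  refine ⟨fun h => ?_, fun h b => h.emultiplicity_mul_left b⟩
  by_contra hx
  obtain ⟨b, hb⟩ := exists_ordN_mul_ne_of_not_isCoprime hN hx
  exact hb (h b)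

theorem statement6_general (N : ℕ) (hN : 1 < N) (a : ℤ)
    (k : ℕ) (hk : (N : ℤ) ^ k ∣ a ∧ ¬ (N : ℤ) ^ (k + 1) ∣ a) :
    ((∀ b : ℤ, ordN N (a * b) = ordN N a + ordN N b) ↔
        Int.gcd (a / (N : ℤ) ^ k) N = 1) ∧
      ((∀ b : ℤ, ordN N (a * b) = ordN N a + ordN N b) ↔
        IsUnit ((a / (N : ℤ) ^ k : ℤ) : ZMod N)) := by
  obtain ⟨⟨a', rfl⟩, hk_succ⟩ := hk
  have hN0 : N ≠ 0 := by omega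
  have hord : ordN N ((N : ℤ) ^ k * a') = k :=
    emultiplicity_eq_coe.mpr ⟨dvd_mul_right _ _, hk_succ⟩
  have hstable : (∀ b : ℤ, ordN N ((N : ℤ) ^ k * a' * b) =
      ordN N ((N : ℤ) ^ k * a') + ordN N b) ↔ IsCoprime a' N := by
    simp only [hord, mul_assoc, ordN_pow_mul hN0,
      (ENat.add_right_injective_of_ne_top (ENat.natCast_ne_top k)).eq_iff]
    exact forall_ordN_mul_eq_iff_isCoprime hN a'
  rw [Int.mul_ediv_cancel_left _ (pow_ne_zero k (Int.natCast_ne_zero.mpr hN0))]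
  exact ⟨hstable.trans Int.isCoprime_iff_gcd_eq_one,
    hstable.trans (isCoprime_comm.trans (ZMod.coe_int_isUnit_iff_isCoprime a' N).symm)⟩

/-- Let `N > 1` and let `a` be a nonzero integer with `k = ord_N(a)`
(i.e. `N^k ∣ a` and `N^(k+1) ∤ a`).  Then `a` is stable for the pseudo-valuation `ord_N`
on `ℤ`, i.e. `ord_N (a*b) = ord_N a + ord_N b` for every integer `b`, if and only if
`gcd (a / N^k, N) = 1`; equivalently, if and only if the image of `a / N^k` in `ℤ/Nℤ`
is a unit. -/
theorem statement6 (N : ℕ) (hN : 1 < N) (a : ℤ) (ha : a ≠ 0)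
    (k : ℕ) (hk : (N : ℤ) ^ k ∣ a ∧ ¬ (N : ℤ) ^ (k + 1) ∣ a) :
    ((∀ b : ℤ, ordN N (a * b) = ordN N a + ordN N b) ↔
        Int.gcd (a / (N : ℤ) ^ k) N = 1) ∧
      ((∀ b : ℤ, ordN N (a * b) = ordN N a + ordN N b) ↔
        IsUnit ((a / (N : ℤ) ^ k : ℤ) : ZMod N)) :=
  statement6_general N hN a k hk
end

section
/- Let N > 1 be an integer and let f ∈ ℤ[x] be a nonzero N-robust polynomial. Then for every prime factor p of N one has ord_p(f) = ord_p(N) · ord_N(f), where ord_p(f) denotes the minimum of the p-adic valuations of the coefficients of f. -/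
open Polynomial

/-- The natural-number valued `N`-adic valuation of a nonzero integer. -/
noncomputable def ordZ (N : ℕ) (a : ℤ) : ℕ := multiplicity (N : ℤ) a

/-- The extension of `ordN` to `ℤ[x]`: the minimum of `ordN` over the coefficients
(infimum over the support; for the zero polynomial this is `∞`). -/
noncomputable def ordPoly (N : ℕ) (f : ℤ[X]) : ℕ∞ :=
  f.support.inf fun s => ordN N (f.coeff s)

/-- `f ∈ ℤ[x]` is `N`-robust if every nonzero coefficient `a` of `f` satisfies
`gcd (a / N^(ord_N a), N) = 1` (i.e. every nonzero coefficient is `ord_N`-stable). -/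
def NRobust (N : ℕ) (f : ℤ[X]) : Prop :=
  ∀ s ∈ f.support, Int.gcd (f.coeff s / (N : ℤ) ^ ordZ N (f.coeff s)) N = 1

/-! A nonzero coefficient factors as `a = N ^ k * b` with `k = ord_N a`, and robustness says
`gcd b N = 1`, so a prime `p ∣ N` does not divide `b` and `ord_p a = k * ord_p N`. Multiplication
by the nonzero constant `ord_p N` is monotone and fixes `⊤`, hence commutes with the minimum over
the coefficients. -/

theorem emultiplicity_pow_mul_of_not_dvd {α : Type*} [CommMonoidWithZero α] [IsCancelMulZero α]
    {p b : α} (hp : Prime p) (a : α) (k : ℕ) (hb : ¬p ∣ b) :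
    emultiplicity p (a ^ k * b) = k * emultiplicity p a := by
  rw [emultiplicity_mul hp, emultiplicity_pow hp, emultiplicity_eq_zero.mpr hb, add_zero]

theorem ordN_eq_ordZ_mul_ordN_of_gcd_eq_one {N : ℕ} (hN : 1 < N) {a : ℤ} (ha : a ≠ 0)
    (hgcd : Int.gcd (a / (N : ℤ) ^ ordZ N a) N = 1) {p : ℕ} (hp : p.Prime) (hpN : p ∣ N) :
    ordN p a = ordZ p N * ordN N a := by
  have hpZ : Prime (p : ℤ) := Nat.prime_iff_prime_int.mp hp
  have hdecomp : (N : ℤ) ^ ordZ N a * (a / (N : ℤ) ^ ordZ N a) = a :=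
    Int.mul_ediv_cancel' (pow_multiplicity_dvd _ _)
  have hp_not_dvd : ¬(p : ℤ) ∣ a / (N : ℤ) ^ ordZ N a := fun h =>
    hpZ.not_isUnit <| (Int.isCoprime_iff_gcd_eq_one.mpr hgcd).isUnit_of_dvd' h
      (Int.natCast_dvd_natCast.mpr hpN)
  have hfin_N : FiniteMultiplicity (N : ℤ) a :=
    Int.finiteMultiplicity_iff.mpr ⟨by rw [Int.natAbs_natCast]; omega, ha⟩
  have hfin_p : FiniteMultiplicity (p : ℤ) N :=
    Int.finiteMultiplicity_iff.mpr ⟨by simpa using hp.ne_one, by exact_mod_cast (by omega : N ≠ 0)⟩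
  calc ordN p a = emultiplicity (p : ℤ) ((N : ℤ) ^ ordZ N a * (a / (N : ℤ) ^ ordZ N a)) := by
        rw [hdecomp, ordN]
    _ = ordZ N a * emultiplicity (p : ℤ) N := emultiplicity_pow_mul_of_not_dvd hpZ _ _ hp_not_dvd
    _ = ordZ p N * ordN N a := by
        rw [hfin_p.emultiplicity_eq_multiplicity, ordN, hfin_N.emultiplicity_eq_multiplicity,
          mul_comm, ordZ, ordZ]

theorem Finset.inf_eq_const_mul_inf {ι : Type*} {s : Finset ι} {f g : ι → ℕ∞} {c : ℕ∞}
    (hc : c ≠ 0) (hfg : ∀ i ∈ s, f i = c * g i) : s.inf f = c * s.inf g := by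
  rw [Finset.inf_congr rfl hfg, Finset.apply_inf_eq_inf_comp_of_linearOrder (c * ·)
    (fun _ _ h => mul_le_mul_right h c) (ENat.mul_top hc)]
  rfl

theorem statement8_general (N : ℕ) (hN : 1 < N) (f : ℤ[X]) (hrob : NRobust N f)
    (p : ℕ) (hp : p.Prime) (hpN : p ∣ N) :
    ordPoly p f = ((ordZ p (N : ℤ) : ℕ∞)) * ordPoly N f := by
  have hc : (ordZ p N : ℕ∞) ≠ 0 := by
    simpa [ordZ, multiplicity_ne_zero] using Int.natCast_dvd_natCast.mpr hpN
  exact Finset.inf_eq_const_mul_inf hc fun s hs =>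
    ordN_eq_ordZ_mul_ordN_of_gcd_eq_one hN (mem_support_iff.mp hs) (hrob s hs) hp hpN

/-- Let `N > 1` and let `f ∈ ℤ[x]` be a nonzero `N`-robust polynomial.
Then for every prime factor `p` of `N` one has `ord_p f = ord_p N · ord_N f`, where
`ord_p f` denotes the minimum of the `p`-adic valuations of the coefficients of `f`. -/
theorem statement8 (N : ℕ) (hN : 1 < N) (f : ℤ[X]) (hf : f ≠ 0) (hrob : NRobust N f)
    (p : ℕ) (hp : p.Prime) (hpN : p ∣ N) :
    ordPoly p f = ((ordZ p (N : ℤ) : ℕ∞)) * ordPoly N f :=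
  statement8_general N hN f hrob p hp hpN
end

section
/- Let N > 1 be an integer, let f ∈ ℤ[x] be a nonzero N-robust polynomial, and let h ∈ ℤ[x] be nonzero. Then ord_N(fh) = ord_N(f) + ord_N(h) and R₀(fh) = R₀(f) · R₀(h) in (ℤ/Nℤ)[y]. -/
open Polynomial

/-- The natural-number value of `ordPoly N f` (equal to `ord_N(f)` for `f ≠ 0`). -/
noncomputable def ordPolyNat (N : ℕ) (f : ℤ[X]) : ℕ := WithTop.untopD 0 (ordPoly N f)

/-- The residual polynomial operator of order zero: `R₀(f)` is the reduction modulo `N`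
of `f / N^(ord_N f)` (with the variable renamed to `y`), and `R₀(0) = 0`. -/
noncomputable def R0 (N : ℕ) (f : ℤ[X]) : Polynomial (ZMod N) :=
  (f.sum fun s a => C (a / (N : ℤ) ^ ordPolyNat N f) * X ^ s).map
    (Int.castRingHom (ZMod N))

/-!
Write `f = N^u f₁` and `h = N^v h₁`, where `u = ord_N f`, `v = ord_N h`, so that `R₀ f` and
`R₀ h` are the nonzero reductions of `f₁` and `h₁` modulo `N`. Robustness of `f` makes every
nonzero coefficient of `R₀ f` a unit of `ℤ/Nℤ`, in particular its leading coefficient, so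
`R₀ f · R₀ h ≠ 0` even though `ℤ/Nℤ` may have zero divisors. Hence `f₁ h₁` has a coefficient
not divisible by `N`, and `f h = N^(u+v) (f₁ h₁)` exhibits both `ord_N (f h) = u + v` and
`R₀ (f h) = R₀ f · R₀ h`.
-/

theorem Int.pow_succ_dvd_iff_dvd_ediv_pow {a b : ℤ} {u : ℕ} (hdvd : b ^ u ∣ a) :
    b ^ (u + 1) ∣ a ↔ b ∣ a / b ^ u := by
  rw [Int.dvd_div_iff_mul_dvd hdvd, pow_succ]

noncomputable def quotPow (N : ℕ) (g : ℤ[X]) (u : ℕ) : ℤ[X] :=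
  g.sum fun s a => C (a / (N : ℤ) ^ u) * X ^ s

section

variable {N : ℕ}

theorem R0_eq_map_quotPow (g : ℤ[X]) :
    R0 N g = (quotPow N g (ordPolyNat N g)).map (Int.castRingHom (ZMod N)) := rfl

theorem coeff_quotPow (g : ℤ[X]) (u t : ℕ) :
    (quotPow N g u).coeff t = g.coeff t / (N : ℤ) ^ u := by
  simp only [quotPow, Polynomial.sum_def, finsetSum_coeff, coeff_C_mul_X_pow]
  rw [Finset.sum_ite_eq, ite_eq_left_iff, notMem_support_iff]
  intro ht
  rw [ht, Int.zero_ediv]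

theorem C_pow_mul_quotPow {g : ℤ[X]} {u : ℕ} (hdvd : ∀ s, (N : ℤ) ^ u ∣ g.coeff s) :
    C ((N : ℤ) ^ u) * quotPow N g u = g := by
  ext t
  rw [coeff_C_mul, coeff_quotPow, Int.mul_ediv_cancel' (hdvd t)]

theorem quotPow_C_pow_mul (hN : N ≠ 0) (k : ℕ) (g : ℤ[X]) :
    quotPow N (C ((N : ℤ) ^ k) * g) k = g := by
  ext t
  rw [coeff_quotPow, coeff_C_mul,
    Int.mul_ediv_cancel_left _ (pow_ne_zero k (by exact_mod_cast hN))]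

theorem map_intCast_ne_zero_iff {g : ℤ[X]} :
    g.map (Int.castRingHom (ZMod N)) ≠ 0 ↔ ∃ t, ¬ (N : ℤ) ∣ g.coeff t := by
  simp [Polynomial.ext_iff, ZMod.intCast_zmod_eq_zero_iff_dvd]

@[simp]
theorem ordPoly_zero : ordPoly N 0 = ⊤ := rfl

@[simp]
theorem R0_zero : R0 N 0 = 0 := by
  simp [R0]

theorem ordN_ne_top (hN : 1 < N) {a : ℤ} (ha : a ≠ 0) : ordN N a ≠ ⊤ :=
  finiteMultiplicity_iff_emultiplicity_ne_top.1 <|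
    Int.finiteMultiplicity_iff.2 ⟨by simpa using hN.ne', ha⟩

theorem exists_ordPoly_eq_ordN {g : ℤ[X]} (hg : g ≠ 0) :
    ∃ t ∈ g.support, ordPoly N g = ordN N (g.coeff t) :=
  Finset.exists_mem_eq_inf _ (nonempty_support_iff.2 hg) _

theorem ordPoly_eq_ordPolyNat (hN : 1 < N) {g : ℤ[X]} (hg : g ≠ 0) :
    ordPoly N g = ordPolyNat N g := by
  obtain ⟨t, ht, heq⟩ := exists_ordPoly_eq_ordN (N := N) hg
  obtain ⟨k, hk⟩ := WithTop.ne_top_iff_exists.1 (heq ▸ ordN_ne_top hN (mem_support_iff.1 ht))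
  rw [ordPolyNat, ← hk, WithTop.untopD_coe]
  rfl

theorem pow_ordPolyNat_dvd_coeff (hN : 1 < N) (g : ℤ[X]) (s : ℕ) :
    (N : ℤ) ^ ordPolyNat N g ∣ g.coeff s := by
  by_cases hs : s ∈ g.support
  · apply pow_dvd_of_le_emultiplicity
    rw [← ordPoly_eq_ordPolyNat hN (by rintro rfl; simp at hs)]
    exact Finset.inf_le hs
  · rw [notMem_support_iff.1 hs]
    exact dvd_zero _

theorem exists_not_dvd_coeff_quotPow (hN : 1 < N) {g : ℤ[X]} (hg : g ≠ 0) :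
    ∃ t, ¬ (N : ℤ) ∣ (quotPow N g (ordPolyNat N g)).coeff t := by
  obtain ⟨t, -, heq⟩ := exists_ordPoly_eq_ordN (N := N) hg
  refine ⟨t, fun hdvd => ?_⟩
  rw [coeff_quotPow,
    ← Int.pow_succ_dvd_iff_dvd_ediv_pow (pow_ordPolyNat_dvd_coeff hN g t)] at hdvd
  have hle := le_emultiplicity_of_pow_dvd hdvd
  rw [← ordN, ← heq, ordPoly_eq_ordPolyNat hN hg, Nat.cast_le] at hle
  omega

theorem R0_ne_zero (hN : 1 < N) {g : ℤ[X]} (hg : g ≠ 0) : R0 N g ≠ 0 :=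
  map_intCast_ne_zero_iff.2 (exists_not_dvd_coeff_quotPow hN hg)

theorem ordPoly_C_pow_mul_of_not_dvd (hN : 1 < N) (k : ℕ) {g : ℤ[X]} {t : ℕ}
    (ht : ¬ (N : ℤ) ∣ g.coeff t) : ordPoly N (C ((N : ℤ) ^ k) * g) = k := by
  have hN0 : (N : ℤ) ≠ 0 := by exact_mod_cast (zero_lt_one.trans hN).ne'
  have hexact : ordN N ((C ((N : ℤ) ^ k) * g).coeff t) = k := by
    rw [coeff_C_mul]
    refine emultiplicity_eq_of_dvd_of_not_dvd (dvd_mul_right _ _) ?_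
    rwa [Int.pow_succ_dvd_iff_dvd_ediv_pow (dvd_mul_right _ _),
      Int.mul_ediv_cancel_left _ (pow_ne_zero k hN0)]
  have ht' : t ∈ (C ((N : ℤ) ^ k) * g).support := by
    rw [mem_support_iff, coeff_C_mul]
    exact mul_ne_zero (pow_ne_zero k hN0) (fun h0 => ht (h0 ▸ dvd_zero _))
  refine le_antisymm (hexact ▸ Finset.inf_le ht') (Finset.le_inf fun s _ => ?_)
  rw [coeff_C_mul]
  exact le_emultiplicity_of_pow_dvd (dvd_mul_right _ _)

theorem R0_C_pow_mul_of_not_dvd (hN : 1 < N) (k : ℕ) {g : ℤ[X]} {t : ℕ}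
    (ht : ¬ (N : ℤ) ∣ g.coeff t) :
    R0 N (C ((N : ℤ) ^ k) * g) = g.map (Int.castRingHom (ZMod N)) := by
  have hk : ordPolyNat N (C ((N : ℤ) ^ k) * g) = k := by
    rw [ordPolyNat, ordPoly_C_pow_mul_of_not_dvd hN k ht]
    rfl
  rw [R0_eq_map_quotPow, hk, quotPow_C_pow_mul (zero_lt_one.trans hN).ne']

theorem NRobust.isUnit_coeff_R0 (hN : 1 < N) {f : ℤ[X]} (hrob : NRobust N f) {t : ℕ}
    (ht : (R0 N f).coeff t ≠ 0) : IsUnit ((R0 N f).coeff t) := by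
  rw [R0_eq_map_quotPow, coeff_map, coeff_quotPow] at ht ⊢
  have hnd : ¬ (N : ℤ) ∣ f.coeff t / (N : ℤ) ^ ordPolyNat N f :=
    mt (ZMod.intCast_zmod_eq_zero_iff_dvd _ N).2 ht
  have hdvd := pow_ordPolyNat_dvd_coeff hN f t
  have hord : ordZ N (f.coeff t) = ordPolyNat N f :=
    multiplicity_eq_of_dvd_of_not_dvd hdvd ((Int.pow_succ_dvd_iff_dvd_ediv_pow hdvd).not.2 hnd)
  have hne : f.coeff t ≠ 0 := fun h0 => hnd (by rw [h0, Int.zero_ediv]; exact dvd_zero _)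
  have hgcd := hrob t (mem_support_iff.2 hne)
  rw [hord] at hgcd
  exact (ZMod.unitOfIsCoprime _ (Int.isCoprime_iff_gcd_eq_one.2 hgcd)).isUnit

theorem NRobust.R0_mul_ne_zero (hN : 1 < N) {f h : ℤ[X]} (hrob : NRobust N f) (hf : f ≠ 0)
    (hh : h ≠ 0) : R0 N f * R0 N h ≠ 0 :=
  (isUnit_leadingCoeff_mul_right_eq_zero_iff <| hrob.isUnit_coeff_R0 hN <|
    leadingCoeff_ne_zero.2 (R0_ne_zero hN hf)).not.2 (R0_ne_zero hN hh)

end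

theorem statement9_general (N : ℕ) (hN : 1 < N) (f h : ℤ[X])
    (hrob : NRobust N f) :
    ordPoly N (f * h) = ordPoly N f + ordPoly N h ∧
      R0 N (f * h) = R0 N f * R0 N h := by
  rcases eq_or_ne f 0 with rfl | hf
  · simp
  rcases eq_or_ne h 0 with rfl | hh
  · simp
  set u := ordPolyNat N f
  set v := ordPolyNat N h
  have hfh : f * h = C ((N : ℤ) ^ (u + v)) * (quotPow N f u * quotPow N h v) := by
    conv_lhs => rw [← C_pow_mul_quotPow (pow_ordPolyNat_dvd_coeff hN f),
      ← C_pow_mul_quotPow (pow_ordPolyNat_dvd_coeff hN h)]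
    rw [pow_add, C_mul]
    ring
  obtain ⟨t, ht⟩ : ∃ t, ¬ (N : ℤ) ∣ (quotPow N f u * quotPow N h v).coeff t :=
    map_intCast_ne_zero_iff.1 <| by
      rw [Polynomial.map_mul]
      exact hrob.R0_mul_ne_zero hN hf hh
  rw [hfh, ordPoly_C_pow_mul_of_not_dvd hN _ ht, R0_C_pow_mul_of_not_dvd hN _ ht,
    Polynomial.map_mul, ordPoly_eq_ordPolyNat hN hf, ordPoly_eq_ordPolyNat hN hh]
  exact ⟨by push_cast; rfl, rfl⟩

/-- Let `N > 1`, let `f ∈ ℤ[x]` be a nonzero `N`-robust polynomial and let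
`h ∈ ℤ[x]` be nonzero.  Then `ord_N (f*h) = ord_N f + ord_N h` and
`R₀(f*h) = R₀(f) · R₀(h)` in `(ℤ/Nℤ)[y]`. -/
theorem statement9 (N : ℕ) (hN : 1 < N) (f h : ℤ[X]) (hf : f ≠ 0) (hh : h ≠ 0)
    (hrob : NRobust N f) :
    ordPoly N (f * h) = ordPoly N f + ordPoly N h ∧
      R0 N (f * h) = R0 N f * R0 N h :=
  statement9_general N hN f h hrob
end

section
/- Let A be a commutative ring, let 𝔪 be a maximal ideal of A, and let t ∈ A[y] be a monic polynomial of positive degree. Set B = A[y]/(t). Then the set of maximal ideals 𝔫 of B whose contraction to A equals 𝔪 is finite and in bijection with the set of monic irreducible factors of the image of t in (A/𝔪)[y]; the bijection sends the monic irreducible factor ψ̄ of red_𝔪(t) to the image in B of the maximal ideal of A[y] generated by 𝔪 and any monic lift ψ ∈ A[y] of ψ̄. -/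
/-!
Maximal ideals of `B` over `𝔪` are the images of the maximal ideals of `A[y]` containing `t` and
`𝔪`. Since these contain the kernel `𝔪[y]` of `red_𝔪`, they correspond in turn to the maximal ideals
of the principal ideal domain `(A/𝔪)[y]` containing `red_𝔪 t`, i.e. to its monic irreducible
factors.
The preimage of `(ψ̄)` under reduction is `𝔪[y] + (ψ)` for every lift `ψ` of `ψ̄`.
-/

open Polynomial

namespace Ideal

variable {R S : Type*} [CommRing R] [CommRing S] {f : R →+* S}

theorem comap_eq_of_map_le {𝔪 : Ideal R} [h𝔪 : 𝔪.IsMaximal] {𝔫 : Ideal S} (h𝔫 : 𝔫 ≠ ⊤)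
    (h : 𝔪.map f ≤ 𝔫) : 𝔫.comap f = 𝔪 :=
  (h𝔪.eq_of_le (comap_ne_top f h𝔫) (map_le_iff_le_comap.mp h)).symm

theorem comap_map_of_surjective_of_ker_le (hf : Function.Surjective f) {I : Ideal R}
    (h : RingHom.ker f ≤ I) : (I.map f).comap f = I := by
  rw [comap_map_of_surjective' f hf, sup_of_le_left h]

theorem comap_span_singleton_apply_of_surjective (hf : Function.Surjective f) (r : R) :
    (span {f r}).comap f = span {r} ⊔ RingHom.ker f := by
  rw [← comap_map_of_surjective' f hf, map_span, Set.image_singleton]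

end Ideal

namespace Polynomial

variable {K : Type*} [Field K]

theorem exists_monic_irreducible_eq_span_of_isMaximal (Q : Ideal K[X]) [hQ : Q.IsMaximal] :
    ∃ g : K[X], g.Monic ∧ Irreducible g ∧ Q = Ideal.span {g} := by
  obtain ⟨g, hg, rfl⟩ :=
    exists_monic_span Q (Ring.ne_bot_of_isMaximal_of_not_isField hQ (Polynomial.not_isField K))
  exact ⟨g, hg, ((Ideal.span_singleton_prime hg.ne_zero).mp hQ.isPrime).irreducible, rfl⟩

theorem finite_setOf_monic_irreducible_dvd {f : K[X]} (hf : f ≠ 0) :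
    {g : K[X] | g.Monic ∧ Irreducible g ∧ g ∣ f}.Finite := by
  classical
  refine (UniqueFactorizationMonoid.normalizedFactors f).toFinset.finite_toSet.subset ?_
  rintro g ⟨hg, hirr, hdvd⟩
  rw [Finset.mem_coe, Multiset.mem_toFinset, Polynomial.mem_normalizedFactors_iff hf]
  exact ⟨hirr, hg, hdvd⟩

variable {A : Type*} [CommRing A] (𝔪 : Ideal A)

theorem mapRingHom_quotientMk_surjective :
    Function.Surjective (mapRingHom (Ideal.Quotient.mk 𝔪)) :=
  map_surjective _ Ideal.Quotient.mk_surjective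

theorem ker_mapRingHom_quotientMk : RingHom.ker (mapRingHom (Ideal.Quotient.mk 𝔪)) = 𝔪.map C := by
  rw [ker_mapRingHom, Ideal.mk_ker]

end Polynomial

namespace AdjoinRoot

variable {A : Type*} [CommRing A] (𝔪 : Ideal A) (t : A[X])

local notation "red" => mapRingHom (Ideal.Quotient.mk 𝔪)

noncomputable def idealOfFactor (g : (A ⧸ 𝔪)[X]) : Ideal (AdjoinRoot t) :=
  ((Ideal.span {g}).comap red).map (mk t)

variable {𝔪 t}

theorem idealOfFactor_eq_map_sup_span {g : (A ⧸ 𝔪)[X]} {ψ : A[X]}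
    (hψ : ψ.map (Ideal.Quotient.mk 𝔪) = g) :
    idealOfFactor 𝔪 t g = (𝔪.map C ⊔ Ideal.span {ψ}).map (mk t) := by
  rw [idealOfFactor, ← hψ, ← coe_mapRingHom,
    Ideal.comap_span_singleton_apply_of_surjective (mapRingHom_quotientMk_surjective 𝔪),
    ker_mapRingHom_quotientMk, sup_comm]

theorem comap_mk_idealOfFactor {g : (A ⧸ 𝔪)[X]} (hg : g ∣ t.map (Ideal.Quotient.mk 𝔪)) :
    (idealOfFactor 𝔪 t g).comap (mk t) = (Ideal.span {g}).comap red := by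
  refine Ideal.comap_map_of_surjective_of_ker_le mk_surjective fun p hp => ?_
  obtain ⟨q, rfl⟩ := mk_eq_zero.mp hp
  rw [Ideal.mem_comap, map_mul, Ideal.mem_span_singleton]
  exact dvd_mul_of_dvd_left hg _

theorem isMaximal_idealOfFactor [𝔪.IsMaximal] {g : (A ⧸ 𝔪)[X]} (hirr : Irreducible g)
    (hg : g ∣ t.map (Ideal.Quotient.mk 𝔪)) : (idealOfFactor 𝔪 t g).IsMaximal := by
  let _ := Ideal.Quotient.field 𝔪
  have := PrincipalIdealRing.isMaximal_of_irreducible hirr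
  have := Ideal.comap_isMaximal_of_surjective _ (mapRingHom_quotientMk_surjective 𝔪)
    (K := Ideal.span {g})
  refine Ideal.IsMaximal.map_of_surjective_of_ker_le mk_surjective ?_
  rw [← comap_mk_idealOfFactor hg]
  exact Ideal.comap_mono bot_le

theorem comap_algebraMap_idealOfFactor [𝔪.IsMaximal] {g : (A ⧸ 𝔪)[X]} (hirr : Irreducible g)
    (hg : g ∣ t.map (Ideal.Quotient.mk 𝔪)) :
    (idealOfFactor 𝔪 t g).comap (algebraMap A (AdjoinRoot t)) = 𝔪 := by
  refine Ideal.comap_eq_of_map_le (isMaximal_idealOfFactor hirr hg).ne_top ?_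
  rw [algebraMap_eq, of, ← Ideal.map_map, idealOfFactor]
  refine Ideal.map_mono ?_
  rw [← ker_mapRingHom_quotientMk]
  exact Ideal.comap_mono bot_le

theorem idealOfFactor_injOn [𝔪.IsPrime] :
    Set.InjOn (idealOfFactor 𝔪 t) {g | g.Monic ∧ g ∣ t.map (Ideal.Quotient.mk 𝔪)} := by
  rintro g₁ ⟨hm₁, hd₁⟩ g₂ ⟨hm₂, hd₂⟩ h
  have hspan : Ideal.span {g₁} = Ideal.span {g₂} := by
    rw [← Ideal.map_comap_of_surjective _ (mapRingHom_quotientMk_surjective 𝔪) (Ideal.span {g₁}),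
      ← comap_mk_idealOfFactor hd₁, h, comap_mk_idealOfFactor hd₂,
      Ideal.map_comap_of_surjective _ (mapRingHom_quotientMk_surjective 𝔪)]
  exact eq_of_monic_of_associated hm₁ hm₂ (Ideal.span_singleton_eq_span_singleton.mp hspan)

theorem exists_idealOfFactor_eq [𝔪.IsMaximal] (𝔫 : Ideal (AdjoinRoot t)) [𝔫.IsMaximal]
    (h𝔫 : 𝔫.comap (algebraMap A (AdjoinRoot t)) = 𝔪) :
    ∃ g : (A ⧸ 𝔪)[X], g.Monic ∧ Irreducible g ∧ g ∣ t.map (Ideal.Quotient.mk 𝔪) ∧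
      idealOfFactor 𝔪 t g = 𝔫 := by
  let _ := Ideal.Quotient.field 𝔪
  set P := 𝔫.comap (mk t)
  have : P.IsMaximal := Ideal.comap_isMaximal_of_surjective _ mk_surjective
  have hker : RingHom.ker red ≤ P := by
    rw [ker_mapRingHom_quotientMk, Ideal.map_le_iff_le_comap, Ideal.comap_comap, ← of,
      ← algebraMap_eq, h𝔫]
  have : (P.map red).IsMaximal :=
    Ideal.IsMaximal.map_of_surjective_of_ker_le (mapRingHom_quotientMk_surjective 𝔪) hker
  obtain ⟨g, hm, hirr, hspan⟩ := exists_monic_irreducible_eq_span_of_isMaximal (P.map red)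
  have htP : t ∈ P := by
    rw [Ideal.mem_comap, mk_self]
    exact 𝔫.zero_mem
  refine ⟨g, hm, hirr, ?_, ?_⟩
  · rw [← Ideal.mem_span_singleton, ← hspan]
    exact Ideal.mem_map_of_mem red htP
  · rw [idealOfFactor, ← hspan,
      Ideal.comap_map_of_surjective_of_ker_le (mapRingHom_quotientMk_surjective 𝔪) hker,
      Ideal.map_comap_of_surjective _ mk_surjective]

variable (𝔪 t)

noncomputable def factorsEquivMaximalIdealsOver [𝔪.IsMaximal] :
    {g : (A ⧸ 𝔪)[X] // g.Monic ∧ Irreducible g ∧ g ∣ t.map (Ideal.Quotient.mk 𝔪)} ≃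
      {𝔫 : Ideal (AdjoinRoot t) // 𝔫.IsMaximal ∧ 𝔫.comap (algebraMap A (AdjoinRoot t)) = 𝔪} :=
  Equiv.ofBijective
    (fun g => ⟨idealOfFactor 𝔪 t g, isMaximal_idealOfFactor g.2.2.1 g.2.2.2,
      comap_algebraMap_idealOfFactor g.2.2.1 g.2.2.2⟩)
    ⟨fun g₁ g₂ h => Subtype.ext <|
        idealOfFactor_injOn ⟨g₁.2.1, g₁.2.2.2⟩ ⟨g₂.2.1, g₂.2.2.2⟩ (congrArg Subtype.val h),
      fun ⟨𝔫, _, h𝔫⟩ =>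
        let ⟨g, hm, hirr, hdvd, hg⟩ := exists_idealOfFactor_eq 𝔫 h𝔫
        ⟨⟨g, hm, hirr, hdvd⟩, Subtype.ext hg⟩⟩

end AdjoinRoot

theorem statement12_general {A : Type*} [CommRing A] (𝔪 : Ideal A) [𝔪.IsMaximal]
    (t : A[X]) (ht : t.Monic) :
    Finite {𝔫 : Ideal (AdjoinRoot t) //
        𝔫.IsMaximal ∧ Ideal.comap (algebraMap A (AdjoinRoot t)) 𝔫 = 𝔪} ∧
      ∃ e : {g : Polynomial (A ⧸ 𝔪) //
              g.Monic ∧ Irreducible g ∧ g ∣ t.map (Ideal.Quotient.mk 𝔪)} ≃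
            {𝔫 : Ideal (AdjoinRoot t) //
              𝔫.IsMaximal ∧ Ideal.comap (algebraMap A (AdjoinRoot t)) 𝔫 = 𝔪},
        ∀ (g : Polynomial (A ⧸ 𝔪))
          (hg : g.Monic ∧ Irreducible g ∧ g ∣ t.map (Ideal.Quotient.mk 𝔪))
          (ψ : A[X]), ψ.Monic → ψ.map (Ideal.Quotient.mk 𝔪) = g →
          (e ⟨g, hg⟩ : Ideal (AdjoinRoot t)) =
            Ideal.map (AdjoinRoot.mk t)
              (Ideal.map (Polynomial.C : A →+* A[X]) 𝔪 ⊔ Ideal.span {ψ}) := by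
  have : Finite {g : (A ⧸ 𝔪)[X] // g.Monic ∧ Irreducible g ∧ g ∣ t.map (Ideal.Quotient.mk 𝔪)} :=
    let _ := Ideal.Quotient.field 𝔪
    (finite_setOf_monic_irreducible_dvd (ht.map _).ne_zero).to_subtype
  refine ⟨.of_equiv _ (AdjoinRoot.factorsEquivMaximalIdealsOver 𝔪 t),
    AdjoinRoot.factorsEquivMaximalIdealsOver 𝔪 t,
    fun _ _ _ _ hψ => AdjoinRoot.idealOfFactor_eq_map_sup_span hψ⟩

/-- Let `A` be a commutative ring, `𝔪` a maximal ideal of `A`, and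
`t ∈ A[y]` a monic polynomial of positive degree.  Set `B = A[y]/(t)` (realized as
`AdjoinRoot t`).  Then the set of maximal ideals `𝔫` of `B` whose contraction to `A` equals
`𝔪` is finite and in bijection with the set of monic irreducible factors of the image of
`t` in `(A/𝔪)[y]`; the bijection sends the monic irreducible factor `ψ̄` of `red_𝔪 t` to
the image in `B` of the maximal ideal of `A[y]` generated by `𝔪` and any monic lift
`ψ ∈ A[y]` of `ψ̄`. -/
theorem statement12 {A : Type*} [CommRing A] (𝔪 : Ideal A) [𝔪.IsMaximal]
    (t : A[X]) (ht : t.Monic) (hdeg : 0 < t.natDegree) :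
    Finite {𝔫 : Ideal (AdjoinRoot t) //
        𝔫.IsMaximal ∧ Ideal.comap (algebraMap A (AdjoinRoot t)) 𝔫 = 𝔪} ∧
      ∃ e : {g : Polynomial (A ⧸ 𝔪) //
              g.Monic ∧ Irreducible g ∧ g ∣ t.map (Ideal.Quotient.mk 𝔪)} ≃
            {𝔫 : Ideal (AdjoinRoot t) //
              𝔫.IsMaximal ∧ Ideal.comap (algebraMap A (AdjoinRoot t)) 𝔫 = 𝔪},
        ∀ (g : Polynomial (A ⧸ 𝔪))
          (hg : g.Monic ∧ Irreducible g ∧ g ∣ t.map (Ideal.Quotient.mk 𝔪))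
          (ψ : A[X]), ψ.Monic → ψ.map (Ideal.Quotient.mk 𝔪) = g →
          (e ⟨g, hg⟩ : Ideal (AdjoinRoot t)) =
            Ideal.map (AdjoinRoot.mk t)
              (Ideal.map (Polynomial.C : A →+* A[X]) 𝔪 ⊔ Ideal.span {ψ}) :=
  statement12_general 𝔪 t ht
end

section
/- Let K be a number field, p a prime number, 𝒫 the set of maximal ideals of ℤ_K over p, and for 𝔭 ∈ 𝒫 let e_𝔭, v_𝔭, w_𝔭 = v_𝔭/e_𝔭, and w = min_𝔭 w_𝔭 be as usual. For each 𝔭 ∈ 𝒫 fix π_𝔭 ∈ K with v_𝔭(π_𝔭) = 1 lying in the valuation ring Z_𝔭 of v_𝔭 in K, and let F_𝔭 = Z_𝔭/𝔭Z_𝔭 be the residue field. For δ ∈ w(K) let K_δ = {α ∈ K : w(α) ≥ δ} and define rd_δ : K_δ → V = ∏_{𝔭 ∈ 𝒫} F_𝔭 by rd_δ(α) = (α·π_𝔭^{−⌊e_𝔭 δ⌋} + 𝔭Z_𝔭)_{𝔭 ∈ 𝒫} (each α·π_𝔭^{−⌊e_𝔭δ⌋} indeed lies in Z_𝔭). Then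 a finite subset ℬ ⊂ K with w(ℬ) ⊂ [0, 1) is p-reduced if and only if for every δ ∈ w(ℬ) the family rd_δ(ℬ_δ) ⊂ V is linearly independent over 𝔽_p, where ℬ_δ = {α ∈ ℬ : w(α) = δ}. -/
/-!
Each normalized valuation `v_𝔭 / e_𝔭` restricts to `ord_p` on `ℚ`, so `w` behaves like a valuation
on the `ℚ`-vector space `K`: it is ultrametric and `w (c • x) = ord_p c + w x`. Moreover
`v_𝔭 (x π_𝔭 ^ (-⌊e_𝔭 δ⌋)) > 0` for all `𝔭` says exactly that `w x > δ`, so the independence of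
`rd_δ(ℬ_δ)` means that no integer combination of `ℬ_δ` with a coefficient prime to `p` has
`w > δ`. Because `w(ℬ) ⊂ [0, 1)`, the value `ord_p a + w α` of a term determines `w α` as its
fractional part, so the terms of minimal value in a combination all lie in one layer `ℬ_δ`;
if they cancel, dividing the coefficients of that layer by one of least `p`-adic order and
clearing denominators (which are prime to `p`) gives a forbidden integer relation.
-/

open Finset NumberField

theorem not_dvd_den_of_padicValRat_nonneg {p : ℕ} [Fact p.Prime] {r : ℚ}
    (hr : 0 ≤ padicValRat p r) : ¬ p ∣ r.den := by
  intro hden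
  have hnum : ¬ (p : ℤ) ∣ r.num := fun hnum =>
    (Fact.out : p.Prime).one_lt.ne'
      (Nat.eq_one_of_dvd_coprimes r.reduced (Int.natCast_dvd.1 hnum) hden)
  have := one_le_padicValNat_of_dvd r.den_nz hden
  rw [padicValRat, padicValInt.eq_zero_of_not_dvd hnum] at hr
  omega

theorem exists_int_eq_mul_of_padicValRat_nonneg {ι : Type*} {p : ℕ} [Fact p.Prime] (s : Finset ι)
    (r : ι → ℚ) (hr : ∀ i ∈ s, 0 ≤ padicValRat p (r i)) :
    ∃ D : ℕ, ¬ p ∣ D ∧ ∃ b : ι → ℤ, ∀ i ∈ s, (b i : ℚ) = D * r i := by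
  refine ⟨∏ i ∈ s, (r i).den, fun h => ?_,
    fun i => (r i).num * ((∏ j ∈ s, (r j).den) / (r i).den : ℕ), fun i hi => ?_⟩
  · obtain ⟨i, hi, hdvd⟩ := ((Fact.out : p.Prime).prime.dvd_finsetProd_iff _).1 h
    exact not_dvd_den_of_padicValRat_nonneg (hr i hi) hdvd
  · obtain ⟨t, ht⟩ := dvd_prod_of_mem (fun j => (r j).den) hi
    dsimp only
    rw [ht, Nat.mul_div_cancel_left _ (r i).den_pos]
    push_cast
    rw [← Rat.mul_den_eq_num]
    ring

section VectorValuation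

variable {V ι : Type*} [AddCommGroup V] [Module ℚ V]

structure IsPAdicVectorValuation (p : ℕ) (w : V → WithTop ℚ) : Prop where
  eq_top_iff : ∀ x, w x = ⊤ ↔ x = 0
  min_le_add : ∀ x y, min (w x) (w y) ≤ w (x + y)
  smul : ∀ (c : ℚ) (x : V), c ≠ 0 → w (c • x) = ((padicValRat p c : ℚ) : WithTop ℚ) + w x

def IsPReduced [Fintype ι] (p : ℕ) (w : V → WithTop ℚ) (α : ι → V) : Prop :=
  ∀ a : ι → ℚ, (∀ i, 0 ≤ padicValRat p (a i)) →
    w (∑ i, a i • α i) = univ.inf fun i => w (a i • α i)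

/-- The images of `{α i | w (α i) = δ}` in the `𝔽_p`-vector space `{w ≥ δ} / {w > δ}` are
linearly independent, for every value `δ` taken by `w` on the family. -/
def IsResiduallyIndependent [Fintype ι] (p : ℕ) (w : V → WithTop ℚ) (α : ι → V) : Prop :=
  ∀ δ : ℚ, (∃ i, w (α i) = δ) → ∀ c : ι → ℤ,
    (δ : WithTop ℚ) < w (∑ i ∈ univ.filter (fun i => w (α i) = δ), c i • α i) →
    ∀ i, w (α i) = δ → (p : ℤ) ∣ c i

namespace IsPAdicVectorValuation

variable {p : ℕ} {w : V → WithTop ℚ} {α : ι → V}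

theorem map_zero (hw : IsPAdicVectorValuation p w) : w 0 = ⊤ := (hw.eq_top_iff 0).2 rfl

theorem map_neg (hw : IsPAdicVectorValuation p w) (x : V) : w (-x) = w x := by
  simpa [padicValRat.neg] using hw.smul (-1) x (by norm_num)

theorem map_smul_of_padicValRat_eq_zero (hw : IsPAdicVectorValuation p w) {c : ℚ} (hc0 : c ≠ 0)
    (hc : padicValRat p c = 0) (x : V) : w (c • x) = w x := by
  simp [hw.smul c x hc0, hc]

theorem map_smul_lt_map_smul (hw : IsPAdicVectorValuation p w) {c : ℚ} (hc : c ≠ 0) {x y : V}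
    (h : w x < w y) : w (c • x) < w (c • y) := by
  rw [hw.smul c x hc, hw.smul c y hc]
  exact WithTop.add_lt_add_left WithTop.coe_ne_top h

theorem inf_le_map_sum (hw : IsPAdicVectorValuation p w) (s : Finset ι) (f : ι → V) :
    s.inf (fun i => w (f i)) ≤ w (∑ i ∈ s, f i) := by
  classical
  induction s using Finset.induction_on with
  | empty => simp [hw.map_zero]
  | insert i s hi ih =>
    rw [sum_insert hi, inf_insert]
    exact (inf_le_inf_left _ ih).trans (hw.min_le_add _ _)

theorem lt_map_of_lt_map_add (hw : IsPAdicVectorValuation p w) {μ : WithTop ℚ} {x y : V}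
    (hxy : μ < w (x + y)) (hx : μ < w x) : μ < w y := by
  calc μ < min (w (x + y)) (w (-x)) := lt_min hxy (by rwa [hw.map_neg])
    _ ≤ w (x + y + -x) := hw.min_le_add _ _
    _ = w y := by rw [add_neg_cancel_comm]

theorem lt_map_sum_filter [Fintype ι] (hw : IsPAdicVectorValuation p w) {P : ι → Prop}
    [DecidablePred P] {μ : WithTop ℚ} {f : ι → V} (hsum : μ < w (∑ i, f i))
    (hout : ∀ i, ¬ P i → μ < w (f i)) :
    μ < w (∑ i ∈ univ.filter P, f i) := by
  rw [← sum_filter_add_sum_filter_not univ P, add_comm] at hsum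
  refine hw.lt_map_of_lt_map_add hsum ?_
  refine lt_of_lt_of_le ?_ (hw.inf_le_map_sum _ _)
  rw [Finset.lt_inf_iff (lt_of_lt_of_le hsum le_top)]
  exact fun i hi => hout i (mem_filter.1 hi).2

theorem eq_of_map_smul_eq (hw : IsPAdicVectorValuation p w) {a b : ℚ} {x y : V} (ha : a ≠ 0)
    (hb : b ≠ 0) (hx : 0 ≤ w x ∧ w x < 1) (hy : 0 ≤ w y ∧ w y < 1) (h : w (a • x) = w (b • y)) :
    w x = w y := by
  rw [hw.smul a x ha, hw.smul b y hb] at h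
  lift w x to ℚ using hx.2.ne_top with ρ
  lift w y to ℚ using hy.2.ne_top with σ
  norm_cast at hx hy h ⊢
  -- `w x` and `w y` are the fractional parts of the common value
  have hfloor := congrArg Int.floor h
  rw [Int.floor_intCast_add, Int.floor_intCast_add, Int.floor_eq_zero_iff.2 hx,
    Int.floor_eq_zero_iff.2 hy] at hfloor
  simp only [add_zero] at hfloor
  rw [hfloor] at h
  exact add_left_cancel h

theorem isResiduallyIndependent_of_isPReduced [Fintype ι] (hw : IsPAdicVectorValuation p w)
    (hred : IsPReduced p w α) : IsResiduallyIndependent p w α := by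
  classical
  intro δ _ c hc i hi
  by_contra hpc
  let a : ι → ℚ := fun j => if w (α j) = δ then c j else 0
  have ha : ∀ j, 0 ≤ padicValRat p (a j) := fun j => by
    unfold a; split_ifs <;> simp [padicValRat.of_int]
  have hsum : ∑ j, a j • α j = ∑ j ∈ univ.filter (fun j => w (α j) = δ), c j • α j := by
    rw [sum_filter]
    refine sum_congr rfl fun j _ => ?_
    unfold a; split_ifs <;> simp [Int.cast_smul_eq_zsmul]
  have hci : w (a i • α i) = δ := by
    have hc0 : (c i : ℚ) ≠ 0 := Int.cast_ne_zero.2 (by rintro h; exact hpc (h ▸ dvd_zero _))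
    simp only [a, if_pos hi]
    rw [hw.map_smul_of_padicValRat_eq_zero hc0
      (by rw [padicValRat.of_int, padicValInt.eq_zero_of_not_dvd hpc, Nat.cast_zero]), hi]
  have := hred a ha
  rw [hsum] at this
  exact (hc.trans_le (this ▸ inf_le (mem_univ i))).ne hci.symm

theorem exists_int_not_dvd_lt_map_sum [Fact p.Prime] (hw : IsPAdicVectorValuation p w)
    {s : Finset ι} {a : ι → ℚ} {j : ι} (hj : j ∈ s) (haj : a j ≠ 0)
    (hr : ∀ i ∈ s, 0 ≤ padicValRat p (a i / a j))
    (hlt : w (a j • α j) < w (∑ i ∈ s, a i • α i)) :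
    ∃ b : ι → ℤ, ¬ (p : ℤ) ∣ b j ∧ w (α j) < w (∑ i ∈ s, b i • α i) := by
  obtain ⟨D, hpD, b, hb⟩ := exists_int_eq_mul_of_padicValRat_nonneg s _ hr
  have hD : (D : ℚ) ≠ 0 := Nat.cast_ne_zero.2 (by rintro rfl; exact hpD (dvd_zero p))
  have hsum : ∑ i ∈ s, b i • α i = ((D : ℚ) / a j) • ∑ i ∈ s, a i • α i := by
    rw [smul_sum]
    refine sum_congr rfl fun i hi => ?_
    rw [← Int.cast_smul_eq_zsmul ℚ, hb i hi, smul_smul]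
    ring_nf
  have hbj : b j = D := by
    have := hb j hj
    rw [div_self haj, mul_one] at this
    exact_mod_cast this
  refine ⟨b, hbj ▸ fun h => hpD (Int.natCast_dvd_natCast.1 h), ?_⟩
  rw [hsum]
  calc w (α j) = w ((D : ℚ) • α j) := by
        rw [hw.map_smul_of_padicValRat_eq_zero hD
          (by rw [padicValRat.of_nat, padicValNat.eq_zero_of_not_dvd hpD, Nat.cast_zero])]
    _ = w (((D : ℚ) / a j) • a j • α j) := by rw [smul_smul, div_mul_cancel₀ _ haj]
    _ < _ := hw.map_smul_lt_map_smul (div_ne_zero hD haj) hlt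

theorem isPReduced_of_isResiduallyIndependent [Fintype ι] [Fact p.Prime]
    (hw : IsPAdicVectorValuation p w) (hα : ∀ i, 0 ≤ w (α i) ∧ w (α i) < 1)
    (hind : IsResiduallyIndependent p w α) :
    IsPReduced p w α := by
  classical
  intro a _
  by_contra hne
  have hlt := lt_of_le_of_ne (hw.inf_le_map_sum univ fun i => a i • α i) (Ne.symm hne)
  have hinf_ne_top := ne_top_of_lt hlt
  obtain ⟨j, -, hj⟩ := exists_mem_eq_inf univ
    (nonempty_iff_ne_empty.2 fun h => hinf_ne_top (by rw [h, inf_empty])) fun i => w (a i • α i)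
  rw [hj] at hlt hinf_ne_top
  have haj : a j ≠ 0 := by rintro h; simp [h, hw.map_zero] at hinf_ne_top
  have hmin : ∀ i, w (a j • α j) ≤ w (a i • α i) := fun i => hj ▸ inf_le (mem_univ i)
  obtain ⟨δ, hδ⟩ := WithTop.ne_top_iff_exists.1 (hα j).2.ne_top
  -- only the indices in the layer `w (α i) = δ` can reach the minimum
  have hout : ∀ i, ¬ w (α i) = δ → w (a j • α j) < w (a i • α i) := by
    intro i hi
    rcases eq_or_ne (a i) 0 with hai | hai
    · rw [hai, zero_smul, hw.map_zero]
      exact lt_top_iff_ne_top.2 hinf_ne_top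
    · exact (hmin i).lt_of_ne fun h => hi (hδ ▸ (hw.eq_of_map_smul_eq haj hai (hα j) (hα i) h).symm)
  have hlayer := hw.lt_map_sum_filter hlt hout
  have hr : ∀ i ∈ univ.filter (fun i => w (α i) = δ), 0 ≤ padicValRat p (a i / a j) := by
    intro i hi
    rcases eq_or_ne (a i) 0 with hai | hai
    · simp [hai]
    have := hmin i
    rw [hw.smul _ _ haj, hw.smul _ _ hai, ← hδ, (mem_filter.1 hi).2,
      WithTop.add_le_add_iff_right WithTop.coe_ne_top] at this
    rw [padicValRat.div hai haj, sub_nonneg]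
    exact_mod_cast this
  obtain ⟨b, hbj, hb⟩ := hw.exists_int_not_dvd_lt_map_sum (mem_filter.2 ⟨mem_univ j, hδ.symm⟩)
    haj hr hlayer
  rw [← hδ] at hb
  exact hbj (hind δ ⟨j, hδ.symm⟩ b hb j hδ.symm)

theorem isPReduced_iff [Fintype ι] [Fact p.Prime] (hw : IsPAdicVectorValuation p w)
    (hα : ∀ i, 0 ≤ w (α i) ∧ w (α i) < 1) :
    IsPReduced p w α ↔ IsResiduallyIndependent p w α :=
  ⟨hw.isResiduallyIndependent_of_isPReduced, hw.isPReduced_of_isResiduallyIndependent hα⟩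

theorem of_forall_le_of_exists_eq {σ : Type*} {s : Set σ} {f : σ → V → WithTop ℚ}
    (hf : ∀ i ∈ s, IsPAdicVectorValuation p (f i))
    (hw : ∀ x, (∀ i ∈ s, w x ≤ f i x) ∧ ∃ i ∈ s, w x = f i x) : IsPAdicVectorValuation p w where
  eq_top_iff x := by
    obtain ⟨i, hi, h⟩ := (hw x).2
    rw [h]
    exact (hf i hi).eq_top_iff x
  min_le_add x y := by
    obtain ⟨i, hi, h⟩ := (hw (x + y)).2
    rw [h]
    exact (min_le_min ((hw x).1 i hi) ((hw y).1 i hi)).trans ((hf i hi).min_le_add x y)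
  smul c x hc := by
    refine le_antisymm ?_ ?_
    · obtain ⟨i, hi, h⟩ := (hw x).2
      rw [h, ← (hf i hi).smul c x hc]
      exact (hw _).1 i hi
    · obtain ⟨i, hi, h⟩ := (hw (c • x)).2
      rw [h, (hf i hi).smul c x hc]
      exact add_le_add_right ((hw x).1 i hi) _

end IsPAdicVectorValuation

end VectorValuation

namespace AddValuation

section Ring

variable {R : Type*} [Ring R] (v : AddValuation R (WithTop ℤ))

theorem map_natCast_nonneg (n : ℕ) : 0 ≤ v n := by
  induction n with
  | zero => simp
  | succ n ih =>
    rw [Nat.cast_succ]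
    exact v.map_le_add ih v.map_one.ge

theorem map_intCast_nonneg (z : ℤ) : 0 ≤ v z := by
  obtain ⟨n, rfl | rfl⟩ := Int.eq_nat_or_neg z <;> simpa using v.map_natCast_nonneg n

theorem map_natCast_eq_zero_of_not_dvd {p n : ℕ} (hp : p.Prime) (hvp : 0 < v p) (hn : ¬ p ∣ n) :
    v n = 0 := by
  refine le_antisymm (not_lt.1 fun hvn => ?_) (v.map_natCast_nonneg n)
  obtain ⟨a, b, hab⟩ := Nat.isCoprime_iff_coprime.2 ((hp.coprime_iff_not_dvd).2 hn)
  have hab' : (a : R) * p + b * n = 1 := by exact_mod_cast congrArg (Int.cast : ℤ → R) hab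
  have := v.map_lt_add (x := a * p) (y := b * n)
    (v.map_mul _ _ ▸ hvp.trans_le (le_add_of_nonneg_left (v.map_intCast_nonneg a)))
    (v.map_mul _ _ ▸ hvn.trans_le (le_add_of_nonneg_left (v.map_intCast_nonneg b)))
  rw [hab', v.map_one] at this
  exact this.false

theorem map_natCast_eq_mul_padicValNat {p : ℕ} [Fact p.Prime] {e : ℕ} (hvp : v p = (e : ℤ))
    (he : 0 < e) {n : ℕ} (hn : n ≠ 0) : v n = ((e * padicValNat p n : ℕ) : ℤ) := by
  have hp : p.Prime := Fact.out
  have hvp' : 0 < v p := by rw [hvp]; exact_mod_cast he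
  calc v n = v ((p : R) ^ n.factorization p * (n / p ^ n.factorization p : ℕ)) := by
        rw [← Nat.cast_pow, ← Nat.cast_mul, Nat.ordProj_mul_ordCompl_eq_self]
    _ = _ := by
        rw [v.map_mul, v.map_pow, v.map_natCast_eq_zero_of_not_dvd hp hvp'
          (Nat.not_dvd_ordCompl hp hn), hvp, add_zero, Nat.factorization_def n hp,
          ← WithTop.coe_nsmul, nsmul_eq_mul]
        congr 1
        push_cast
        ring

theorem map_intCast_natAbs (z : ℤ) : v z = v z.natAbs := by
  obtain ⟨n, rfl | rfl⟩ := Int.eq_nat_or_neg z <;> simp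

end Ring

variable {K : Type*} [Field K] (v : AddValuation K (WithTop ℤ))

theorem map_ratCast_eq_mul_padicValRat [CharZero K] {p : ℕ} [Fact p.Prime] {e : ℕ}
    (hvp : v p = (e : ℤ)) (he : 0 < e) {c : ℚ} (hc : c ≠ 0) : v c = (e * padicValRat p c : ℤ) := by
  rw [Rat.cast_def, v.map_div, v.map_intCast_natAbs,
    v.map_natCast_eq_mul_padicValNat hvp he c.den_nz,
    v.map_natCast_eq_mul_padicValNat hvp he (Int.natAbs_ne_zero.2 (Rat.num_ne_zero.2 hc)),
    ← WithTop.LinearOrderedAddCommGroup.coe_sub, padicValRat, padicValInt]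
  congr 1
  push_cast
  ring

theorem map_zpow_of_eq_one {π : K} (hπ : v π = 1) (k : ℤ) : v (π ^ k) = k := by
  cases k with
  | ofNat n => simp [hπ]
  | negSucc n =>
    rw [zpow_negSucc, map_inv, map_pow, hπ, ← WithTop.coe_one, ← WithTop.coe_nsmul,
      ← WithTop.LinearOrderedAddCommGroup.coe_neg, Int.negSucc_eq]
    simp [add_comm]

theorem isPAdicVectorValuation_map_div [CharZero K] {p : ℕ} [Fact p.Prime] {e : ℕ}
    (hvp : v p = (e : ℤ)) (he : 0 < e) :
    IsPAdicVectorValuation p fun x => (v x).map fun z : ℤ => (z : ℚ) / e where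
  eq_top_iff x := by simp [v.top_iff]
  min_le_add x y := by
    have hmono : Monotone (WithTop.map fun z : ℤ => (z : ℚ) / e) :=
      Monotone.withTop_map fun a b h => div_le_div_of_nonneg_right (by exact_mod_cast h)
        (Nat.cast_nonneg e)
    rw [← hmono.map_min]
    exact hmono (v.map_add x y)
  smul c x hc := by
    rw [Rat.smul_def, v.map_mul, v.map_ratCast_eq_mul_padicValRat hvp he hc]
    cases v x with
    | top => simp
    | coe z =>
      rw [← WithTop.coe_add, WithTop.map_coe, WithTop.map_coe, ← WithTop.coe_add, WithTop.coe_inj]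
      push_cast
      field_simp

theorem zero_lt_map_mul_zpow_neg_floor_iff {π : K} (hπ : v π = 1) {e : ℕ} (he : 0 < e) (x : K)
    (δ : ℚ) :
    0 < v (x * π ^ (-⌊(e : ℚ) * δ⌋)) ↔ (δ : WithTop ℚ) < (v x).map fun z : ℤ => (z : ℚ) / e := by
  rcases eq_or_ne x 0 with rfl | hx
  · simp
  obtain ⟨z, hz⟩ := WithTop.ne_top_iff_exists.1 (v.ne_top_iff.2 hx)
  rw [v.map_mul, ← hz, v.map_zpow_of_eq_one hπ, ← WithTop.coe_add, WithTop.map_coe,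
    WithTop.coe_lt_coe, ← WithTop.coe_zero, WithTop.coe_lt_coe,
    lt_div_iff₀ (by exact_mod_cast he), mul_comm, ← Int.floor_lt]
  omega

end AddValuation

theorem exists_addValuation_coe_eq {K : Type*} [Field K] {f : K → WithTop ℤ}
    (htop : ∀ x, f x = ⊤ ↔ x = 0) (hmul : ∀ x y, f (x * y) = f x + f y)
    (hmin : ∀ x y, min (f x) (f y) ≤ f (x + y)) : ∃ v : AddValuation K (WithTop ℤ), ⇑v = f := by
  have h1 : f 1 = 0 := by
    have h := hmul 1 1
    rw [mul_one] at h
    obtain ⟨z, hz⟩ := WithTop.ne_top_iff_exists.1 ((htop 1).not.2 one_ne_zero)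
    rw [← hz] at h ⊢
    norm_cast at h ⊢
    omega
  exact ⟨AddValuation.of f ((htop 0).2 rfl) h1 hmin hmul, rfl⟩

theorem exists_addValuation_coe_eq_of_natCast_mem {K R : Type*} [Field K] [CommRing R]
    [Algebra R K] {q : Ideal R} {p e : ℕ} (hpq : (p : R) ∈ q) {f : K → WithTop ℤ}
    (htop : ∀ x, f x = ⊤ ↔ x = 0) (hmul : ∀ x y, f (x * y) = f x + f y)
    (hmin : ∀ x y, min (f x) (f y) ≤ f (x + y))
    (hint : ∀ (x : R) (k : ℕ), ((k : ℤ) : WithTop ℤ) ≤ f (algebraMap R K x) ↔ x ∈ q ^ k)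
    (he : ((e : ℤ) : WithTop ℤ) = f p) :
    ∃ v : AddValuation K (WithTop ℤ), ⇑v = f ∧ v p = (e : ℤ) ∧ 0 < e := by
  obtain ⟨v, rfl⟩ := exists_addValuation_coe_eq htop hmul hmin
  refine ⟨v, rfl, he.symm, ?_⟩
  have := (hint p 1).2 (by simpa using hpq)
  rw [map_natCast, ← he] at this
  exact_mod_cast this

theorem lt_iff_forall_lt_of_forall_le_of_exists_eq {α σ : Type*} [Preorder α] {s : Set σ}
    {g : σ → α} {a b : α} (h : (∀ i ∈ s, a ≤ g i) ∧ ∃ i ∈ s, a = g i) :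
    b < a ↔ ∀ i ∈ s, b < g i := by
  obtain ⟨i, hi, rfl⟩ := h.2
  exact ⟨fun hb j hj => hb.trans_le (h.1 j hj), fun hb => hb i hi⟩

theorem statement14_general {K : Type*} [Field K] [NumberField K]
    (p : ℕ) (hp : p.Prime)
    (P : Set (Ideal (RingOfIntegers K)))
    (hP : ∀ q : Ideal (RingOfIntegers K), q ∈ P ↔ q.IsMaximal ∧ (p : RingOfIntegers K) ∈ q)
    (v : Ideal (RingOfIntegers K) → K → WithTop ℤ)
    (hv_top : ∀ q ∈ P, ∀ x : K, v q x = ⊤ ↔ x = 0)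
    (hv_mul : ∀ q ∈ P, ∀ x y : K, v q (x * y) = v q x + v q y)
    (hv_min : ∀ q ∈ P, ∀ x y : K, min (v q x) (v q y) ≤ v q (x + y))
    (hv_int : ∀ q ∈ P, ∀ (x : RingOfIntegers K) (k : ℕ),
        ((k : ℤ) : WithTop ℤ) ≤ v q (algebraMap (RingOfIntegers K) K x) ↔ x ∈ q ^ k)
    (e : Ideal (RingOfIntegers K) → ℕ)
    (he : ∀ q ∈ P, ((e q : ℤ) : WithTop ℤ) = v q (p : K))
    (w : K → WithTop ℚ)
    (hw : ∀ x : K,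
        (∀ q ∈ P, w x ≤ (v q x).map fun z : ℤ => (z : ℚ) / (e q : ℚ)) ∧
        (∃ q ∈ P, w x = (v q x).map fun z : ℤ => (z : ℚ) / (e q : ℚ)))
    (π : Ideal (RingOfIntegers K) → K)
    (hπ : ∀ q ∈ P, v q (π q) = 1)
    (m : ℕ) (α : Fin m → K)
    (hw01 : ∀ i : Fin m, 0 ≤ w (α i) ∧ w (α i) < 1) :
    (∀ a : Fin m → ℚ, (∀ i, 0 ≤ padicValRat p (a i)) →
        w (∑ i, a i • α i) = Finset.univ.inf fun i => w (a i • α i)) ↔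
      (∀ δ : ℚ, (∃ i : Fin m, w (α i) = (δ : WithTop ℚ)) →
        ∀ c : Fin m → ℤ,
          (∀ q ∈ P, 0 < v q (∑ i ∈ Finset.univ.filter (fun i => w (α i) = (δ : WithTop ℚ)),
              (c i : K) * (α i * π q ^ (-⌊(e q : ℚ) * δ⌋)))) →
          ∀ i : Fin m, w (α i) = (δ : WithTop ℚ) → (p : ℤ) ∣ c i) := by
  have : Fact p.Prime := ⟨hp⟩
  have hplace : ∀ q ∈ P, ∃ V : AddValuation K (WithTop ℤ), ⇑V = v q ∧ V p = (e q : ℤ) ∧ 0 < e q :=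
    fun q hq => exists_addValuation_coe_eq_of_natCast_mem ((hP q).1 hq).2 (hv_top q hq)
      (hv_mul q hq) (hv_min q hq) (hv_int q hq) (he q hq)
  have hwq : ∀ q ∈ P, IsPAdicVectorValuation p fun x => (v q x).map fun z : ℤ => (z : ℚ) / e q := by
    intro q hq
    obtain ⟨V, hV, hvp, he⟩ := hplace q hq
    exact hV ▸ V.isPAdicVectorValuation_map_div hvp he
  have hrd : ∀ q ∈ P, ∀ (δ : ℚ) (x : K), 0 < v q (x * π q ^ (-⌊(e q : ℚ) * δ⌋)) ↔
      (δ : WithTop ℚ) < (v q x).map fun z : ℤ => (z : ℚ) / e q := by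
    intro q hq δ x
    obtain ⟨V, hV, -, he⟩ := hplace q hq
    exact hV ▸ V.zero_lt_map_mul_zpow_neg_floor_iff (hV ▸ hπ q hq) he x δ
  refine ((IsPAdicVectorValuation.of_forall_le_of_exists_eq hwq hw).isPReduced_iff hw01).trans
    (forall_congr' fun δ => imp_congr_right fun _ => forall_congr' fun c => imp_congr_left ?_)
  rw [lt_iff_forall_lt_of_forall_le_of_exists_eq (hw _)]
  refine forall₂_congr fun q hq => ?_
  rw [← hrd q hq]
  simp only [zsmul_eq_mul, Finset.sum_mul, mul_assoc]

/-- Let `K` be a number field, `p` a prime, `𝒫` the set of maximal ideals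
of `ℤ_K` over `p`, and for `𝔭 ∈ 𝒫` let `e_𝔭`, `v_𝔭`, `w_𝔭 = v_𝔭/e_𝔭` and `w = min_𝔭 w_𝔭`
be as usual.  For each `𝔭 ∈ 𝒫` fix `π_𝔭 ∈ K` with `v_𝔭 (π_𝔭) = 1` (hence `π_𝔭` lies in the
valuation ring `Z_𝔭` of `v_𝔭`).  For `δ ∈ w(K)` let `K_δ = {α : w α ≥ δ}` and define
`rd_δ : K_δ → V = ∏_{𝔭 ∈ 𝒫} F_𝔭` by `rd_δ α = (α·π_𝔭^(-⌊e_𝔭 δ⌋) mod 𝔭Z_𝔭)_𝔭`.  Then a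
finite subset `ℬ = {α₁, …, α_m} ⊂ K` with `w(ℬ) ⊂ [0,1)` is `p`-reduced if and only if for
every `δ ∈ w(ℬ)` the family `rd_δ(ℬ_δ)` is `𝔽_p`-linearly independent in `V`, where
`ℬ_δ = {α ∈ ℬ : w α = δ}`.  (Here linear independence of `rd_δ(ℬ_δ)` over `𝔽_p` is spelled
out via integer lifts of the coefficients: whenever integers `c_i` satisfy
`Σ_{i ∈ ℬ_δ} c_i·α_i·π_𝔭^(-⌊e_𝔭 δ⌋) ≡ 0 (mod 𝔭Z_𝔭)`, i.e. has positive `v_𝔭`, for every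
`𝔭 ∈ 𝒫`, then `p ∣ c_i` for all `i ∈ ℬ_δ`.) -/
theorem statement14 {K : Type*} [Field K] [NumberField K]
    (p : ℕ) (hp : p.Prime)
    (P : Set (Ideal (RingOfIntegers K)))
    (hP : ∀ q : Ideal (RingOfIntegers K), q ∈ P ↔ q.IsMaximal ∧ (p : RingOfIntegers K) ∈ q)
    (v : Ideal (RingOfIntegers K) → K → WithTop ℤ)
    (hv_top : ∀ q ∈ P, ∀ x : K, v q x = ⊤ ↔ x = 0)
    (hv_mul : ∀ q ∈ P, ∀ x y : K, v q (x * y) = v q x + v q y)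
    (hv_min : ∀ q ∈ P, ∀ x y : K, min (v q x) (v q y) ≤ v q (x + y))
    (hv_int : ∀ q ∈ P, ∀ (x : RingOfIntegers K) (k : ℕ),
        ((k : ℤ) : WithTop ℤ) ≤ v q (algebraMap (RingOfIntegers K) K x) ↔ x ∈ q ^ k)
    (e : Ideal (RingOfIntegers K) → ℕ)
    (he : ∀ q ∈ P, ((e q : ℤ) : WithTop ℤ) = v q (p : K))
    (w : K → WithTop ℚ)
    (hw : ∀ x : K,
        (∀ q ∈ P, w x ≤ (v q x).map fun z : ℤ => (z : ℚ) / (e q : ℚ)) ∧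
        (∃ q ∈ P, w x = (v q x).map fun z : ℤ => (z : ℚ) / (e q : ℚ)))
    (π : Ideal (RingOfIntegers K) → K)
    (hπ : ∀ q ∈ P, v q (π q) = 1)
    (m : ℕ) (α : Fin m → K) (hα : Function.Injective α)
    (hw01 : ∀ i : Fin m, 0 ≤ w (α i) ∧ w (α i) < 1) :
    (∀ a : Fin m → ℚ, (∀ i, 0 ≤ padicValRat p (a i)) →
        w (∑ i, a i • α i) = Finset.univ.inf fun i => w (a i • α i)) ↔
      (∀ δ : ℚ, (∃ i : Fin m, w (α i) = (δ : WithTop ℚ)) →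
        ∀ c : Fin m → ℤ,
          (∀ q ∈ P, 0 < v q (∑ i ∈ Finset.univ.filter (fun i => w (α i) = (δ : WithTop ℚ)),
              (c i : K) * (α i * π q ^ (-⌊(e q : ℚ) * δ⌋)))) →
          ∀ i : Fin m, w (α i) = (δ : WithTop ℚ) → (p : ℤ) ∣ c i) :=
  statement14_general p hp P hP v hv_top hv_mul hv_min hv_int e he w hw π hπ m α hw01
end
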